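/- Let s ∈ (0,1), N > 2s, Ω ⊂ ℝ^N open, bounded with Lipschitz boundary, A ∈ C(ℝ^N,ℝ^N), β_∞ ∈ ℝ, and suppose f satisfies (f1), (f2) and (f3). If h ∈ ℕ* is such that β₀ + β_∞ < β_h^s, then there exist ρ > 0 and c₀ > 0 such that J_A(u) ≥ c₀ for every u ∈ E_h with ‖u‖_{X_{0,A}} = ρ; moreover ρ can be taken arbitrarily small. -/

import Mathlib

open MeasureTheory Filter Topology Set

noncomputable section

abbrev Euc (N : ℕ) := EuclideanSpace ℝ (Fin N)

/-- Lipschitz boundary: near every boundary point, after an isometric change of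
coordinates, `Ω` is the open region above the graph of a Lipschitz function. -/
def HasLipschitzBoundary {N : ℕ} (Ω : Set (Euc N)) : Prop :=
  ∀ x ∈ frontier Ω, ∃ r : ℝ, 0 < r ∧
    ∃ (e : Euc N ≃ₗᵢ[ℝ] WithLp 2 (Euc (N - 1) × ℝ)) (K : NNReal)
      (g : Euc (N - 1) → ℝ), LipschitzWith K g ∧
      ∀ y ∈ Metric.ball x r,
        (y ∈ Ω ↔ g (WithLp.equiv 2 (Euc (N - 1) × ℝ) (e y)).1
          < (WithLp.equiv 2 (Euc (N - 1) × ℝ) (e y)).2)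

/-- The normalizing constant `c_{N,s}`. -/
def cNs (N : ℕ) (s : ℝ) : ℝ :=
  s * 2 ^ (2 * s) * Real.Gamma ((N + 2 * s) / 2) / (Real.pi ^ ((N : ℝ) / 2) * Real.Gamma (1 - s))

/-- The magnetic difference `u(x) - e^{i (x-y)·A((x+y)/2)} u(y)`. -/
def magDiff {N : ℕ} (A : Euc N → Euc N) (u : Euc N → ℂ) (x y : Euc N) : ℂ :=
  u x - Complex.exp (Complex.I * ((inner ℝ (x - y) (A ((2 : ℝ)⁻¹ • (x + y))) : ℝ) : ℂ)) * u y

/-- The real scalar product of `X_{0,A}`. -/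
def Xinner (N : ℕ) (s : ℝ) (A : Euc N → Euc N) (u v : Euc N → ℂ) : ℝ :=
  cNs N s / 2 *
    ∫ p : Euc N × Euc N,
      (magDiff A u p.1 p.2 * (starRingEnd ℂ) (magDiff A v p.1 p.2)).re /
        ‖p.1 - p.2‖ ^ ((N : ℝ) + 2 * s)

/-- The squared Gagliardo-type magnetic seminorm `‖u‖²_{X_{0,A}}`. -/
def Xnorm2 (N : ℕ) (s : ℝ) (A : Euc N → Euc N) (u : Euc N → ℂ) : ℝ :=
  Xinner N s A u u

/-- Squared `L²` norm on `Ω`. -/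
def l2sq {N : ℕ} (Ω : Set (Euc N)) (u : Euc N → ℂ) : ℝ :=
  ∫ x in Ω, ‖u x‖ ^ 2

/-- The real `L²(Ω,ℂ)` pairing `Re ∫_Ω u conj v`. -/
def l2re {N : ℕ} (Ω : Set (Euc N)) (u v : Euc N → ℂ) : ℝ :=
  ∫ x in Ω, (u x * (starRingEnd ℂ) (v x)).re

/-- Membership in `H^s_A(ℝ^N)`: closure of `C_c^∞(ℝ^N,ℂ)` in the norm
`(|u|₂² + ‖u‖²_{X_{0,A}})^{1/2}`. -/
def MemHsA (N : ℕ) (s : ℝ) (A : Euc N → Euc N) (u : Euc N → ℂ) : Prop :=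
  ∃ φ : ℕ → Euc N → ℂ,
    (∀ n, ContDiff ℝ (⊤ : ℕ∞) (φ n) ∧ HasCompactSupport (φ n)) ∧
    Tendsto (fun n => (∫ x, ‖u x - φ n x‖ ^ 2) + Xnorm2 N s A fun x => u x - φ n x)
      atTop (𝓝 0)

/-- Membership in `X_{0,A}`. -/
def MemX0 (N : ℕ) (s : ℝ) (A : Euc N → Euc N) (Ω : Set (Euc N)) (u : Euc N → ℂ) : Prop :=
  MemHsA N s A u ∧ ∀ᵐ x, x ∉ Ω → u x = 0

/-- `β` is a (variational Dirichlet) eigenvalue of `(-Δ)^s_A`, i.e. `β ∈ σ((-Δ)^s_A)`. -/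
def InSpec (N : ℕ) (s : ℝ) (A : Euc N → Euc N) (Ω : Set (Euc N)) (β : ℝ) : Prop :=
  ∃ u, MemX0 N s A Ω u ∧ ¬ u =ᵐ[volume] (0 : Euc N → ℂ) ∧
    ∀ φ, MemX0 N s A Ω φ → Xinner N s A u φ = β * l2re Ω u φ

/-- Condition (f1). -/
def Cond_f1 {N : ℕ} (Ω : Set (Euc N)) (f : Euc N → ℝ → ℝ) : Prop :=
  (∀ t : ℝ, 0 ≤ t → Measurable fun x => f x t) ∧
  (∀ᵐ x ∂volume.restrict Ω, ContinuousOn (f x) (Set.Ici 0)) ∧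
  (∀ a : ℝ, 0 < a → ∃ C : ℝ,
    ∀ᵐ x ∂volume.restrict Ω, ∀ t : ℝ, |t| ≤ a → |f x (t ^ 2) * t| ≤ C)

/-- Condition (f2): `f(x,t) → 0` as `t → +∞`, uniformly for a.e. `x ∈ Ω`. -/
def Cond_f2 {N : ℕ} (Ω : Set (Euc N)) (f : Euc N → ℝ → ℝ) : Prop :=
  ∀ ε : ℝ, 0 < ε → ∃ T : ℝ, ∀ᵐ x ∂volume.restrict Ω, ∀ t : ℝ, T ≤ t → |f x t| ≤ ε

/-- Condition (f3): `f(x,t) → β₀ ≠ 0` as `t → 0⁺`, uniformly for a.e. `x ∈ Ω`. -/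
def Cond_f3 {N : ℕ} (Ω : Set (Euc N)) (f : Euc N → ℝ → ℝ) (β₀ : ℝ) : Prop :=
  β₀ ≠ 0 ∧
  ∀ ε : ℝ, 0 < ε → ∃ δ : ℝ, 0 < δ ∧
    ∀ᵐ x ∂volume.restrict Ω, ∀ t : ℝ, 0 < t → t < δ → |f x t - β₀| ≤ ε

/-- Weak solution of `(-Δ)^s_A u = β_∞ u + f(x,|u|²)u` in `Ω`, `u = 0` outside `Ω`. -/
def IsWeakSol (N : ℕ) (s : ℝ) (A : Euc N → Euc N) (Ω : Set (Euc N)) (βinf : ℝ)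
    (f : Euc N → ℝ → ℝ) (u : Euc N → ℂ) : Prop :=
  MemX0 N s A Ω u ∧
  ∀ φ, MemX0 N s A Ω φ →
    Xinner N s A u φ =
      βinf * l2re Ω u φ +
        ∫ x in Ω, f x (‖u x‖ ^ 2) * (u x * (starRingEnd ℂ) (φ x)).re

/-- The sequence of variational Dirichlet eigenvalues `(β_m^s)` of `(-Δ)^s_A`
with associated eigenfunctions `(f_m)`, obtained by the min procedure on the
Rayleigh quotients (1-based indexing). -/
structure EigenSystem (N : ℕ) (s : ℝ) (A : Euc N → Euc N) (Ω : Set (Euc N))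
    (β : ℕ → ℝ) (F : ℕ → Euc N → ℂ) : Prop where
  mem : ∀ m, 1 ≤ m → MemX0 N s A Ω (F m)
  orth : ∀ m, 1 ≤ m → ∀ j, 1 ≤ j → j < m → Xinner N s A (F m) (F j) = 0
  nontriv : ∀ m, 1 ≤ m → ¬ F m =ᵐ[volume] (0 : Euc N → ℂ)
  eig : ∀ m, 1 ≤ m → Xnorm2 N s A (F m) = β m * l2sq Ω (F m)
  minim : ∀ m, 1 ≤ m → ∀ u, MemX0 N s A Ω u →
    (∀ j, 1 ≤ j → j < m → Xinner N s A u (F j) = 0) →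
    ¬ u =ᵐ[volume] (0 : Euc N → ℂ) → β m * l2sq Ω u ≤ Xnorm2 N s A u

/-- Membership in `E_m` (for the family of eigenfunctions `F`). -/
def MemEm (N : ℕ) (s : ℝ) (A : Euc N → Euc N) (Ω : Set (Euc N)) (F : ℕ → Euc N → ℂ)
    (m : ℕ) (u : Euc N → ℂ) : Prop :=
  MemX0 N s A Ω u ∧ ∀ j, 1 ≤ j → j < m → Xinner N s A u (F j) = 0

/-- `H_m = span{f₁,…,f_m}`. -/
def Hspan {N : ℕ} (F : ℕ → Euc N → ℂ) (m : ℕ) : Submodule ℝ (Euc N → ℂ) :=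
  Submodule.span ℝ (F '' Set.Icc 1 m)

/-- `F(x,t) = ∫₀ᵗ f(x,σ) dσ`. -/
def Fprim {N : ℕ} (f : Euc N → ℝ → ℝ) (x : Euc N) (t : ℝ) : ℝ :=
  ∫ σ in (0 : ℝ)..t, f x σ

/-- The energy functional `J_A`. -/
def JA (N : ℕ) (s : ℝ) (A : Euc N → Euc N) (Ω : Set (Euc N)) (βinf : ℝ)
    (f : Euc N → ℝ → ℝ) (u : Euc N → ℂ) : ℝ :=
  Xnorm2 N s A u - βinf * l2sq Ω u - ∫ x in Ω, Fprim f x (‖u x‖ ^ 2)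

/-- The differential of `J_A` evaluated at `u` in the direction `φ`. -/
def JA' (N : ℕ) (s : ℝ) (A : Euc N → Euc N) (Ω : Set (Euc N)) (βinf : ℝ)
    (f : Euc N → ℝ → ℝ) (u φ : Euc N → ℂ) : ℝ :=
  Xinner N s A u φ - βinf * l2re Ω u φ -
    ∫ x in Ω, f x (‖u x‖ ^ 2) * (u x * (starRingEnd ℂ) (φ x)).re

end


section AuxLemmas
open ENNReal

lemma ae_prod_of_ae {α β : Type*} [MeasurableSpace α] [MeasurableSpace β]
    (μ : Measure α) (ν : Measure β) [SFinite ν] {p : α → Prop} {q : β → Prop}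
    (h1 : ∀ᵐ x ∂μ, p x) (h2 : ∀ᵐ y ∂ν, q y) :
    ∀ᵐ z ∂μ.prod ν, p z.1 ∧ q z.2 := by
  have hA : μ.prod ν {z : α × β | ¬ p z.1} = 0 := by
    have : {z : α × β | ¬ p z.1} = {x | ¬ p x} ×ˢ (univ : Set β) := by
      ext z; simp
    rw [this, Measure.prod_prod]
    rw [ae_iff] at h1
    simp [h1]
  have hB : μ.prod ν {z : α × β | ¬ q z.2} = 0 := by
    have : {z : α × β | ¬ q z.2} = (univ : Set α) ×ˢ {y | ¬ q y} := by
      ext z; simp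
    rw [this, Measure.prod_prod]
    rw [ae_iff] at h2
    simp [h2]
  rw [ae_iff]
  refine measure_mono_null (fun z hz => ?_) (measure_union_null hA hB)
  simp only [mem_setOf_eq, not_and_or] at hz ⊢
  exact hz

lemma min_lip (a b n : ℝ) : (min a n - min b n)^2 ≤ (a-b)^2 := by
  rw [← sq_abs (min a n - min b n), ← sq_abs (a-b)]
  apply pow_le_pow_left₀ (abs_nonneg _)
  rcases le_total a n with h|h <;> rcases le_total b n with h'|h' <;>
    simp [min_eq_left, min_eq_right, h, h', abs_le] <;> constructor <;>
    cases' abs_cases (a-b) with hc hc <;> cases' abs_cases (b-a) with hd hd <;> linarith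

lemma div_le_div_nonneg_num {a b w : ℝ} (h : a ≤ b) (ha : 0 ≤ a) (hw : 0 ≤ w) :
    a / w ≤ b / w := by
  rcases eq_or_lt_of_le hw with h0|h0
  · simp [← h0]
  · gcongr

lemma avg_bound {N : ℕ} (hN1 : 0 < N) {s : ℝ} (hs0 : 0 < s)
    (ν : Euc N → ℝ) (hν : Measurable ν) {r : ℝ} (hr : 0 < r) (x : Euc N) :
    ENNReal.ofReal ((ν x)^2) * volume (Metric.ball x r)
      ≤ 2 * ENNReal.ofReal (r ^ ((N:ℝ) + 2*s)) *
          (∫⁻ y, ENNReal.ofReal ((ν x - ν y)^2 / ‖x - y‖ ^ ((N:ℝ) + 2*s)))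
        + 2 * ∫⁻ y, ENNReal.ofReal ((ν y)^2) := by
  haveI : Nonempty (Fin N) := Fin.pos_iff_nonempty.mp hN1
  haveI : Nontrivial (Euc N) := inferInstance
  set p : ℝ := (N:ℝ) + 2*s with hp_def
  have hp : 0 < p := by positivity
  have hwm : Measurable fun y : Euc N => ‖x - y‖ ^ p :=
    ((Real.continuous_rpow_const hp.le).comp
      (continuous_const.sub continuous_id).norm).measurable
  have hmeas1 : Measurable fun y => ENNReal.ofReal ((ν x - ν y)^2) :=
    ((measurable_const.sub hν).pow_const 2).ennreal_ofReal
  have hmeasq : Measurable fun y => ENNReal.ofReal ((ν x - ν y)^2 / ‖x - y‖ ^ p) :=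
    (((measurable_const.sub hν).pow_const 2).div hwm).ennreal_ofReal
  have hterm1 : (∫⁻ y in Metric.ball x r, 2 * ENNReal.ofReal ((ν x - ν y)^2))
      ≤ 2 * ENNReal.ofReal (r ^ p) *
        ∫⁻ y, ENNReal.ofReal ((ν x - ν y)^2 / ‖x - y‖ ^ p) := by
    rw [lintegral_const_mul _ hmeas1, mul_assoc]
    gcongr
    calc ∫⁻ y in Metric.ball x r, ENNReal.ofReal ((ν x - ν y)^2)
        ≤ ∫⁻ y in Metric.ball x r,
            ENNReal.ofReal (r ^ p) * ENNReal.ofReal ((ν x - ν y)^2 / ‖x - y‖ ^ p) := by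
          apply lintegral_mono_ae
          have hxne : ∀ᵐ (y : Euc N) ∂volume, y ≠ x := by
            simp only [ae_iff, not_not]
            exact measure_mono_null (fun y hy => by simpa using hy) (measure_singleton x)
          rw [ae_restrict_iff' measurableSet_ball]
          filter_upwards [hxne] with y hyx hmem
          have hw0 : 0 < ‖x - y‖ ^ p :=
            Real.rpow_pos_of_pos (norm_pos_iff.mpr (sub_ne_zero.mpr (Ne.symm hyx))) p
          have hle : ‖x - y‖ ≤ r := by
            rw [Metric.mem_ball] at hmem
            rw [← dist_eq_norm]
            rw [dist_comm]
            exact hmem.le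
          have hwr : ‖x - y‖ ^ p ≤ r ^ p := Real.rpow_le_rpow (norm_nonneg _) hle hp.le
          rw [← ENNReal.ofReal_mul (by positivity)]
          apply ENNReal.ofReal_le_ofReal
          calc (ν x - ν y)^2 = (ν x - ν y)^2 / ‖x - y‖ ^ p * ‖x - y‖ ^ p :=
                (div_mul_cancel₀ _ hw0.ne').symm
            _ ≤ (ν x - ν y)^2 / ‖x - y‖ ^ p * r ^ p := by
                apply mul_le_mul_of_nonneg_left hwr (by positivity)
            _ = r ^ p * ((ν x - ν y)^2 / ‖x - y‖ ^ p) := mul_comm _ _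
      _ ≤ ENNReal.ofReal (r ^ p) * ∫⁻ y, ENNReal.ofReal ((ν x - ν y)^2 / ‖x - y‖ ^ p) := by
          rw [lintegral_const_mul _ hmeasq]
          gcongr
          exact Measure.restrict_le_self
  have hterm2 : (∫⁻ y in Metric.ball x r, 2 * ENNReal.ofReal ((ν y)^2))
      ≤ 2 * ∫⁻ y, ENNReal.ofReal ((ν y)^2) := by
    rw [lintegral_const_mul _ (hν.pow_const 2).ennreal_ofReal]
    gcongr
    exact Measure.restrict_le_self
  calc ENNReal.ofReal ((ν x)^2) * volume (Metric.ball x r)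
      = ∫⁻ _ in Metric.ball x r, ENNReal.ofReal ((ν x)^2) := by rw [setLIntegral_const]
    _ ≤ ∫⁻ y in Metric.ball x r,
          (2 * ENNReal.ofReal ((ν x - ν y)^2) + 2 * ENNReal.ofReal ((ν y)^2)) := by
        apply lintegral_mono (fun y => ?_)
        have h1 : (ν x)^2 ≤ 2*(ν x - ν y)^2 + 2*(ν y)^2 := by nlinarith [sq_nonneg (ν x - 2*ν y)]
        calc ENNReal.ofReal ((ν x)^2) ≤ ENNReal.ofReal (2*(ν x - ν y)^2 + 2*(ν y)^2) :=
              ENNReal.ofReal_le_ofReal h1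
          _ = 2 * ENNReal.ofReal ((ν x - ν y)^2) + 2 * ENNReal.ofReal ((ν y)^2) := by
              rw [ENNReal.ofReal_add (by positivity) (by positivity),
                ENNReal.ofReal_mul (by norm_num), ENNReal.ofReal_mul (by norm_num)]
              norm_num
    _ = (∫⁻ y in Metric.ball x r, 2 * ENNReal.ofReal ((ν x - ν y)^2))
        + ∫⁻ y in Metric.ball x r, 2 * ENNReal.ofReal ((ν y)^2) := by
        rw [lintegral_add_left (hmeas1.const_mul 2)]
    _ ≤ _ := add_le_add hterm1 hterm2

lemma core_bounds {N : ℕ} (hN1 : 0 < N) {s : ℝ} (hs0 : 0 < s)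
    {Ω : Set (Euc N)} (hΩm : MeasurableSet Ω) (hΩfin : volume Ω ≠ ⊤) :
    ∃ CL b : ℝ, 0 < CL ∧ 0 < b ∧
    ∀ (ν : Euc N → ℝ), Measurable ν → (∀ x, 0 ≤ ν x) →
      (∀ᵐ x, x ∉ Ω → ν x = 0) →
    ∀ (Ik : ℝ), 0 ≤ Ik →
      (∫⁻ pq : Euc N × Euc N,
          ENNReal.ofReal ((ν pq.1 - ν pq.2)^2 / ‖pq.1 - pq.2‖ ^ ((N:ℝ)+2*s))
        ∂(volume.prod volume)) ≤ ENNReal.ofReal Ik →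
      (∫⁻ x in Ω, ENNReal.ofReal ((ν x)^2)) ≤ ENNReal.ofReal (CL * Ik) ∧
      ∀ δ : ℝ, 0 < δ → ∀ r : ℝ, 0 < r →
        (∫⁻ x in Ω ∩ {x | δ ≤ (ν x)^2}, ENNReal.ofReal ((ν x)^2))
          ≤ ENNReal.ofReal
              ((2*(r ^ ((N:ℝ)+2*s))*Ik + 2*(CL*Ik)*(CL*Ik/δ)) / (r ^ (N:ℝ) * b)) := by
  haveI : Nonempty (Fin N) := Fin.pos_iff_nonempty.mp hN1
  set p : ℝ := (N:ℝ) + 2*s with hp_def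
  have hp : 0 < p := by positivity
  set cB : ℝ≥0∞ := volume (Metric.ball (0 : Euc N) 1) with hcB_def
  have hcB0 : cB ≠ 0 := (Metric.measure_ball_pos _ _ one_pos).ne'
  have hcBfin : cB ≠ ⊤ := (measure_ball_lt_top).ne
  set b : ℝ := cB.toReal with hb_def
  have hb : 0 < b := ENNReal.toReal_pos hcB0 hcBfin
  have hcB_eq : cB = ENNReal.ofReal b := (ENNReal.ofReal_toReal hcBfin).symm
  -- choose r₀
  set X0 : ℝ := (4 * volume Ω / cB).toReal with hX0_def
  set r₀ : ℝ := max 1 (X0 + 1) with hr₀_def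
  have hr₀1 : 1 ≤ r₀ := le_max_left _ _
  have hr₀ : 0 < r₀ := lt_of_lt_of_le one_pos hr₀1
  have hr₀X : X0 < r₀ ^ N := by
    calc X0 < X0 + 1 := lt_add_one _
      _ ≤ r₀ := le_max_right _ _
      _ ≤ r₀ ^ N := le_self_pow₀ hr₀1 hN1.ne'
  have habsorb : 4 * volume Ω ≤ ENNReal.ofReal (r₀ ^ N) * cB := by
    have hfin : 4 * volume Ω / cB ≠ ⊤ :=
      (ENNReal.div_lt_top (by finiteness) hcB0).ne
    have h1 : 4 * volume Ω / cB ≤ ENNReal.ofReal (r₀ ^ N) := by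
      rw [← ENNReal.ofReal_toReal hfin]
      exact ENNReal.ofReal_le_ofReal (le_of_lt hr₀X)
    calc 4 * volume Ω = 4 * volume Ω / cB * cB := by
          rw [ENNReal.div_mul_cancel hcB0 hcBfin]
      _ ≤ ENNReal.ofReal (r₀ ^ N) * cB := mul_le_mul_left h1 _
  set CL : ℝ := 4 * r₀ ^ p / (r₀ ^ N * b) with hCL_def
  have hCL : 0 < CL := by
    apply div_pos (by positivity) (by positivity)
  refine ⟨CL, b, hCL, hb, ?_⟩
  intro ν hν hν0 hνsupp Ik hIk hK
  haveI : Nontrivial (Euc N) := inferInstance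
  -- measurability of kernels
  have hwnorm : Measurable fun pq : Euc N × Euc N => ‖pq.1 - pq.2‖ ^ p :=
    ((Real.continuous_rpow_const hp.le).comp
      ((continuous_fst.sub continuous_snd).norm)).measurable
  have hq_meas : Measurable (fun pq : Euc N × Euc N =>
      ENNReal.ofReal ((ν pq.1 - ν pq.2)^2 / ‖pq.1 - pq.2‖ ^ p)) :=
    (((((hν.comp measurable_fst).sub (hν.comp measurable_snd)).pow_const 2).div
      hwnorm)).ennreal_ofReal
  set w : ℕ → Euc N → ℝ := fun n x => min (ν x) (n:ℝ) with hw_def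
  have hw_meas : ∀ n, Measurable (w n) := fun n => hν.min measurable_const
  have hw_nonneg : ∀ n x, 0 ≤ w n x := fun n x => le_min (hν0 x) (Nat.cast_nonneg n)
  have hqn_meas : ∀ n : ℕ, Measurable (fun pq : Euc N × Euc N =>
      ENNReal.ofReal ((w n pq.1 - w n pq.2)^2 / ‖pq.1 - pq.2‖ ^ p)) := fun n =>
    ((((((hw_meas n).comp measurable_fst).sub ((hw_meas n).comp measurable_snd)).pow_const 2).div
      hwnorm)).ennreal_ofReal
  set Dν : Euc N → ℝ≥0∞ :=
    fun x => ∫⁻ y, ENNReal.ofReal ((ν x - ν y)^2 / ‖x - y‖ ^ p) with hDν_def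
  have hDν_meas : Measurable Dν := hq_meas.lintegral_prod_right'
  set Dn : ℕ → Euc N → ℝ≥0∞ :=
    fun n x => ∫⁻ y, ENNReal.ofReal ((w n x - w n y)^2 / ‖x - y‖ ^ p) with hDn_def
  have hDn_meas : ∀ n, Measurable (Dn n) := fun n => (hqn_meas n).lintegral_prod_right'
  have hKν : (∫⁻ x, Dν x) ≤ ENNReal.ofReal Ik := by
    rw [hDν_def, ← lintegral_prod _ hq_meas.aemeasurable]
    exact hK
  have hKn : ∀ n, (∫⁻ x, Dn n x) ≤ ENNReal.ofReal Ik := by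
    intro n
    rw [hDn_def, ← lintegral_prod _ (hqn_meas n).aemeasurable]
    refine le_trans (lintegral_mono (fun pq => ?_)) hK
    apply ENNReal.ofReal_le_ofReal
    exact div_le_div_nonneg_num (min_lip _ _ _) (sq_nonneg _)
      (Real.rpow_nonneg (norm_nonneg _) p)
  -- support: global lintegrals equal Ω-lintegrals
  have hsupp_glob : ∀ (g : Euc N → ℝ), Measurable g → (∀ x, 0 ≤ g x) →
      (∀ᵐ x, x ∉ Ω → g x = 0) →
      (∫⁻ x, ENNReal.ofReal ((g x)^2)) = ∫⁻ x in Ω, ENNReal.ofReal ((g x)^2) := by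
    intro g hg hg0 hgs
    have heq : (fun x => ENNReal.ofReal ((g x)^2)) =ᵐ[volume]
        Ω.indicator (fun x => ENNReal.ofReal ((g x)^2)) := by
      filter_upwards [hgs] with x hx
      by_cases hxΩ : x ∈ Ω
      · rw [Set.indicator_of_mem hxΩ]
      · rw [Set.indicator_of_notMem hxΩ, hx hxΩ]
        simp
    rw [lintegral_congr_ae heq, lintegral_indicator hΩm]
  have hw_supp : ∀ n, ∀ᵐ x, x ∉ Ω → w n x = 0 := by
    intro n
    filter_upwards [hνsupp] with x hx hxΩ
    show min (ν x) (n:ℝ) = 0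
    rw [hx hxΩ]
    exact min_eq_left (by positivity)
  set Ln : ℕ → ℝ≥0∞ := fun n => ∫⁻ x, ENNReal.ofReal ((w n x)^2) with hLn_def
  have hLn_Ω : ∀ n, Ln n = ∫⁻ x in Ω, ENNReal.ofReal ((w n x)^2) := fun n =>
    hsupp_glob (w n) (hw_meas n) (hw_nonneg n) (hw_supp n)
  have hLn_fin : ∀ n, Ln n ≠ ⊤ := by
    intro n
    rw [hLn_Ω n]
    have hb2 : (∫⁻ x in Ω, ENNReal.ofReal ((w n x)^2))
        ≤ ENNReal.ofReal ((n:ℝ)^2) * volume Ω := by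
      calc (∫⁻ x in Ω, ENNReal.ofReal ((w n x)^2))
          ≤ ∫⁻ _ in Ω, ENNReal.ofReal ((n:ℝ)^2) := by
            apply lintegral_mono (fun x => ?_)
            apply ENNReal.ofReal_le_ofReal
            apply pow_le_pow_left₀ (hw_nonneg n x) (min_le_right _ _)
        _ = ENNReal.ofReal ((n:ℝ)^2) * volume Ω := setLIntegral_const _ _
    exact ne_top_of_le_ne_top (by finiteness) hb2
  have hball : ∀ (r : ℝ), 0 < r → ∀ x : Euc N,
      volume (Metric.ball x r) = ENNReal.ofReal (r ^ N) * cB := by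
    intro r hr x
    rw [hcB_def, Measure.addHaar_ball volume x hr.le, finrank_euclideanSpace_fin]
  -- generic integrated average bound over a subset
  have hint_avg : ∀ (g : Euc N → ℝ), Measurable g →
      ∀ (D : Euc N → ℝ≥0∞), Measurable D → ∀ (Lg : ℝ≥0∞),
      ∀ (r : ℝ), 0 < r →
      (∀ x, ENNReal.ofReal ((g x)^2) * volume (Metric.ball x r)
          ≤ 2 * ENNReal.ofReal (r ^ p) * D x + 2 * Lg) →
      ∀ (S' : Set (Euc N)), MeasurableSet S' →
      (∫⁻ x in S', ENNReal.ofReal ((g x)^2)) * (ENNReal.ofReal (r ^ N) * cB)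
        ≤ 2 * ENNReal.ofReal (r ^ p) * (∫⁻ x, D x) + 2 * Lg * volume S' := by
    intro g hg D hD Lg r hr havg S' hS'
    calc (∫⁻ x in S', ENNReal.ofReal ((g x)^2)) * (ENNReal.ofReal (r ^ N) * cB)
        = ∫⁻ x in S', ENNReal.ofReal ((g x)^2) * (ENNReal.ofReal (r ^ N) * cB) :=
          (lintegral_mul_const _ (hg.pow_const 2).ennreal_ofReal).symm
      _ ≤ ∫⁻ x in S', (2 * ENNReal.ofReal (r ^ p) * D x + 2 * Lg) := by
          apply lintegral_mono (fun x => ?_)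
          rw [← hball r hr x]
          exact havg x
      _ = (∫⁻ x in S', 2 * ENNReal.ofReal (r ^ p) * D x) + 2 * Lg * volume S' := by
          rw [lintegral_add_right _ measurable_const, setLIntegral_const]
      _ = 2 * ENNReal.ofReal (r ^ p) * (∫⁻ x in S', D x) + 2 * Lg * volume S' := by
          rw [lintegral_const_mul _ hD]
      _ ≤ _ := by
          gcongr
          exact Measure.restrict_le_self
  -- Poincaré for truncations
  have habs2 : ∀ n, Ln n * (ENNReal.ofReal (r₀ ^ N) * cB)
      ≤ 4 * ENNReal.ofReal (r₀ ^ p) * ENNReal.ofReal Ik := by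
    intro n
    have hpoin : Ln n * (ENNReal.ofReal (r₀ ^ N) * cB)
        ≤ 2 * ENNReal.ofReal (r₀ ^ p) * ENNReal.ofReal Ik + 2 * Ln n * volume Ω := by
      have h1 := hint_avg (w n) (hw_meas n) (Dn n) (hDn_meas n) (Ln n) r₀ hr₀
        (fun x => avg_bound hN1 hs0 (w n) (hw_meas n) hr₀ x) Ω hΩm
      calc Ln n * (ENNReal.ofReal (r₀ ^ N) * cB)
          = (∫⁻ x in Ω, ENNReal.ofReal ((w n x)^2)) * (ENNReal.ofReal (r₀ ^ N) * cB) := by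
            rw [← hLn_Ω n]
        _ ≤ 2 * ENNReal.ofReal (r₀ ^ p) * (∫⁻ x, Dn n x) + 2 * Ln n * volume Ω := h1
        _ ≤ _ := by
            gcongr
            exact hKn n
    set Xn := Ln n * (ENNReal.ofReal (r₀ ^ N) * cB) with hXn_def
    have hXfin : Xn ≠ ⊤ := by
      apply ENNReal.mul_ne_top (hLn_fin n)
      finiteness
    have h2 : 2 * Ln n * volume Ω ≤ Xn / 2 := by
      rw [ENNReal.le_div_iff_mul_le (Or.inl two_ne_zero) (Or.inl ENNReal.ofNat_ne_top)]
      calc 2 * Ln n * volume Ω * 2 = Ln n * (4 * volume Ω) := by ring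
        _ ≤ Ln n * (ENNReal.ofReal (r₀ ^ N) * cB) := mul_le_mul_right habsorb _
    have h3 : Xn ≤ 2 * ENNReal.ofReal (r₀ ^ p) * ENNReal.ofReal Ik + Xn / 2 :=
      hpoin.trans (add_le_add_right h2 _)
    have h5 : Xn / 2 ≤ 2 * ENNReal.ofReal (r₀ ^ p) * ENNReal.ofReal Ik := by
      have h4 : Xn / 2 + Xn / 2 ≤ 2 * ENNReal.ofReal (r₀ ^ p) * ENNReal.ofReal Ik + Xn / 2 := by
        rw [ENNReal.add_halves]
        exact h3
      exact ENNReal.le_of_add_le_add_right ((ENNReal.div_lt_top hXfin two_ne_zero).ne) h4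
    calc Xn = Xn / 2 + Xn / 2 := (ENNReal.add_halves _).symm
      _ ≤ 2 * ENNReal.ofReal (r₀ ^ p) * ENNReal.ofReal Ik
          + 2 * ENNReal.ofReal (r₀ ^ p) * ENNReal.ofReal Ik := add_le_add h5 h5
      _ = 4 * ENNReal.ofReal (r₀ ^ p) * ENNReal.ofReal Ik := by ring
  have hLn_bound : ∀ n, Ln n ≤ ENNReal.ofReal (CL * Ik) := by
    intro n
    have h1 := habs2 n
    have hden0 : (0:ℝ) < r₀ ^ N * b := by positivity
    have h2 : Ln n * ENNReal.ofReal (r₀ ^ N * b) ≤ ENNReal.ofReal (4 * r₀ ^ p * Ik) := by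
      calc Ln n * ENNReal.ofReal (r₀ ^ N * b)
          = Ln n * (ENNReal.ofReal (r₀ ^ N) * cB) := by
            rw [ENNReal.ofReal_mul (by positivity), hcB_eq]
        _ ≤ 4 * ENNReal.ofReal (r₀ ^ p) * ENNReal.ofReal Ik := h1
        _ = ENNReal.ofReal (4 * r₀ ^ p * Ik) := by
            rw [ENNReal.ofReal_mul (by positivity), ENNReal.ofReal_mul (by norm_num)]
            norm_num
    have h3 : Ln n ≤ ENNReal.ofReal (4 * r₀ ^ p * Ik) / ENNReal.ofReal (r₀ ^ N * b) := by
      rw [ENNReal.le_div_iff_mul_le (Or.inl (by simp [hden0])) (Or.inl ENNReal.ofReal_ne_top)]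
      exact h2
    calc Ln n ≤ ENNReal.ofReal (4 * r₀ ^ p * Ik) / ENNReal.ofReal (r₀ ^ N * b) := h3
      _ = ENNReal.ofReal (4 * r₀ ^ p * Ik / (r₀ ^ N * b)) :=
          (ENNReal.ofReal_div_of_pos hden0).symm
      _ = ENNReal.ofReal (CL * Ik) := by
          rw [hCL_def]
          ring_nf
  -- monotone convergence
  have hL1 : (∫⁻ x in Ω, ENNReal.ofReal ((ν x)^2)) ≤ ENNReal.ofReal (CL * Ik) := by
    have hmono : Monotone fun (n : ℕ) (x : Euc N) => ENNReal.ofReal ((w n x)^2) := by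
      intro m n hmn
      intro x
      apply ENNReal.ofReal_le_ofReal
      apply pow_le_pow_left₀ (hw_nonneg m x)
      exact min_le_min le_rfl (Nat.cast_le.mpr hmn)
    have hsup : ∀ x, (⨆ n : ℕ, ENNReal.ofReal ((w n x)^2)) = ENNReal.ofReal ((ν x)^2) := by
      intro x
      apply le_antisymm
      · apply iSup_le (fun n => ?_)
        apply ENNReal.ofReal_le_ofReal
        apply pow_le_pow_left₀ (hw_nonneg n x) (min_le_left _ _)
      · apply le_iSup_of_le ⌈ν x⌉₊
        apply le_of_eq
        rw [hw_def]
        simp only []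
        rw [min_eq_left (Nat.le_ceil _)]
    calc (∫⁻ x in Ω, ENNReal.ofReal ((ν x)^2))
        = ∫⁻ x in Ω, ⨆ n : ℕ, ENNReal.ofReal ((w n x)^2) := by
          apply lintegral_congr (fun x => (hsup x).symm)
      _ = ⨆ n : ℕ, ∫⁻ x in Ω, ENNReal.ofReal ((w n x)^2) :=
          lintegral_iSup (fun n => ((hw_meas n).pow_const 2).ennreal_ofReal) hmono
      _ ≤ ENNReal.ofReal (CL * Ik) := by
          apply iSup_le (fun n => ?_)
          rw [← hLn_Ω n]
          exact hLn_bound n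
  refine ⟨hL1, ?_⟩
  intro δ hδ r hr
  set S : Set (Euc N) := Ω ∩ {x | δ ≤ (ν x)^2} with hS_def
  have hSmeas : MeasurableSet S := hΩm.inter (measurableSet_le measurable_const (hν.pow_const 2))
  have hSsub : S ⊆ Ω := inter_subset_left
  have hLg_Ω : (∫⁻ x, ENNReal.ofReal ((ν x)^2)) = ∫⁻ x in Ω, ENNReal.ofReal ((ν x)^2) :=
    hsupp_glob ν hν hν0 hνsupp
  have hLg : (∫⁻ x, ENNReal.ofReal ((ν x)^2)) ≤ ENNReal.ofReal (CL * Ik) := by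
    rw [hLg_Ω]
    exact hL1
  have hμS : volume S ≤ ENNReal.ofReal (CL * Ik / δ) := by
    have h1 : ENNReal.ofReal δ * volume S ≤ ∫⁻ x in Ω, ENNReal.ofReal ((ν x)^2) := by
      calc ENNReal.ofReal δ * volume S = ∫⁻ _ in S, ENNReal.ofReal δ := by
            rw [setLIntegral_const, mul_comm]
        _ ≤ ∫⁻ x in S, ENNReal.ofReal ((ν x)^2) := by
            apply lintegral_mono_ae
            rw [ae_restrict_iff' hSmeas]
            apply Filter.Eventually.of_forall
            intro x hx
            exact ENNReal.ofReal_le_ofReal hx.2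
        _ ≤ ∫⁻ x in Ω, ENNReal.ofReal ((ν x)^2) :=
            lintegral_mono' (Measure.restrict_mono hSsub le_rfl) le_rfl
    have h2 : volume S * ENNReal.ofReal δ ≤ ENNReal.ofReal (CL * Ik) := by
      rw [mul_comm]
      exact h1.trans hL1
    rw [ENNReal.ofReal_div_of_pos hδ]
    rw [ENNReal.le_div_iff_mul_le (Or.inl (by simp [hδ])) (Or.inl ENNReal.ofReal_ne_top)]
    exact h2
  -- bad set bound
  have hbad1 : (∫⁻ x in S, ENNReal.ofReal ((ν x)^2)) * (ENNReal.ofReal (r ^ N) * cB)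
      ≤ ENNReal.ofReal (2 * r ^ p * Ik + 2 * (CL * Ik) * (CL * Ik / δ)) := by
    have h1 := hint_avg ν hν Dν hDν_meas (∫⁻ x, ENNReal.ofReal ((ν x)^2)) r hr
      (fun x => avg_bound hN1 hs0 ν hν hr x) S hSmeas
    calc (∫⁻ x in S, ENNReal.ofReal ((ν x)^2)) * (ENNReal.ofReal (r ^ N) * cB)
        ≤ 2 * ENNReal.ofReal (r ^ p) * (∫⁻ x, Dν x)
          + 2 * (∫⁻ x, ENNReal.ofReal ((ν x)^2)) * volume S := h1
      _ ≤ 2 * ENNReal.ofReal (r ^ p) * ENNReal.ofReal Ik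
          + 2 * ENNReal.ofReal (CL * Ik) * ENNReal.ofReal (CL * Ik / δ) := by
          gcongr <;> first
            | positivity
            | exact mul_nonneg hCL.le hIk
            | exact hKν
            | exact hLg
            | exact hμS
      _ = ENNReal.ofReal (2 * r ^ p * Ik + 2 * (CL * Ik) * (CL * Ik / δ)) := by
          have hrp : (0:ℝ) ≤ r ^ p := Real.rpow_nonneg hr.le p
          have hCI : (0:ℝ) ≤ CL * Ik := mul_nonneg hCL.le hIk
          have hCId : (0:ℝ) ≤ CL * Ik / δ := div_nonneg hCI hδ.le
          rw [ENNReal.ofReal_add (mul_nonneg (mul_nonneg (by norm_num) hrp) hIk)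
            (mul_nonneg (mul_nonneg (by norm_num) hCI) hCId)]
          rw [ENNReal.ofReal_mul (mul_nonneg (by norm_num) hrp),
            ENNReal.ofReal_mul (by norm_num : (0:ℝ) ≤ 2),
            ENNReal.ofReal_mul (mul_nonneg (by norm_num) hCI),
            ENNReal.ofReal_mul (by norm_num : (0:ℝ) ≤ 2)]
          norm_num
  have hden0 : (0:ℝ) < r ^ N * b := by positivity
  have h3 : (∫⁻ x in S, ENNReal.ofReal ((ν x)^2))
      ≤ ENNReal.ofReal ((2 * r ^ p * Ik + 2 * (CL * Ik) * (CL * Ik / δ)) / (r ^ N * b)) := by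
    rw [ENNReal.ofReal_div_of_pos hden0]
    rw [ENNReal.le_div_iff_mul_le (Or.inl (by simp [hden0])) (Or.inl ENNReal.ofReal_ne_top)]
    calc (∫⁻ x in S, ENNReal.ofReal ((ν x)^2)) * ENNReal.ofReal (r ^ N * b)
        = (∫⁻ x in S, ENNReal.ofReal ((ν x)^2)) * (ENNReal.ofReal (r ^ N) * cB) := by
          rw [ENNReal.ofReal_mul (by positivity), hcB_eq]
      _ ≤ _ := hbad1
  rw [show r ^ (N:ℝ) = r ^ N from Real.rpow_natCast r N]
  exact h3

lemma floor_div_tendsto (t : ℝ) (ht : 0 ≤ t) :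
    Tendsto (fun n : ℕ => (⌊t * (n+1)⌋₊ : ℝ) / (n+1)) atTop (𝓝 t) := by
  have hlow : ∀ n : ℕ, t - 1/((n:ℝ)+1) ≤ (⌊t * (n+1)⌋₊ : ℝ) / (n+1) := by
    intro n
    have hn : (0:ℝ) < (n:ℝ)+1 := by positivity
    rw [le_div_iff₀ hn]
    have h1 := Nat.lt_floor_add_one (t * ((n:ℝ)+1))
    have h2 : (t - 1/((n:ℝ)+1)) * ((n:ℝ)+1) = t*((n:ℝ)+1) - 1 := by field_simp
    linarith
  have hup : ∀ n : ℕ, (⌊t * (n+1)⌋₊ : ℝ) / (n+1) ≤ t := by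
    intro n
    have hn : (0:ℝ) < (n:ℝ)+1 := by positivity
    rw [div_le_iff₀ hn]
    exact Nat.floor_le (by positivity)
  have h1 : Tendsto (fun n : ℕ => t - 1/((n:ℝ)+1)) atTop (𝓝 t) := by
    have := tendsto_one_div_add_atTop_nhds_zero_nat (𝕜 := ℝ)
    have h2 := (tendsto_const_nhds (x := t) (f := atTop (α := ℕ))).sub this
    simpa using h2
  exact tendsto_of_tendsto_of_tendsto_of_le_of_le h1 tendsto_const_nhds hlow hup

lemma fprim_rest {N : ℕ} {Ω : Set (Euc N)} {f : Euc N → ℝ → ℝ}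
    {τ : Euc N → ℝ} (hτ : Measurable τ) (hτ0 : ∀ x, 0 ≤ τ x)
    (hgA : AEMeasurable (fun p : Euc N × ℝ => f p.1 (max p.2 0)) ((volume.restrict Ω).prod volume)) :
    AEStronglyMeasurable (fun x => Fprim f x (τ x)) (volume.restrict Ω) := by
  set g : Euc N × ℝ → ℝ := fun p => f p.1 (max p.2 0) with hg_def
  set Aset : Set (Euc N × ℝ) := {p | 0 < p.2 ∧ p.2 ≤ τ p.1} with hA_def
  have hAmeas : MeasurableSet Aset := by
    have h1 : MeasurableSet {p : Euc N × ℝ | 0 < p.2} :=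
      measurableSet_lt measurable_const measurable_snd
    have h2 : MeasurableSet {p : Euc N × ℝ | p.2 ≤ τ p.1} :=
      measurableSet_le measurable_snd (hτ.comp measurable_fst)
    exact (h1.inter h2 : MeasurableSet ({p : Euc N × ℝ | 0 < p.2} ∩ {p | p.2 ≤ τ p.1}))
  have hΦ : AEStronglyMeasurable (Aset.indicator g) ((volume.restrict Ω).prod volume) :=
    (hgA.indicator hAmeas).aestronglyMeasurable
  have hint := hΦ.integral_prod_right'
  apply hint.congr
  apply Filter.Eventually.of_forall
  intro x
  have heq : (fun σ => Aset.indicator g (x, σ)) = (Set.Ioc (0:ℝ) (τ x)).indicator (f x) := by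
    funext σ
    simp only [Set.indicator_apply, hA_def, mem_setOf_eq, Set.mem_Ioc]
    by_cases hσ : 0 < σ ∧ σ ≤ τ x
    · simp only [hσ, if_true, hg_def, max_eq_left hσ.1.le]
    · simp [hσ]
  calc (∫ σ, Aset.indicator g (x, σ))
      = ∫ σ, (Set.Ioc (0:ℝ) (τ x)).indicator (f x) σ := by rw [heq]
    _ = ∫ σ in Set.Ioc (0:ℝ) (τ x), f x σ := integral_indicator measurableSet_Ioc
    _ = Fprim f x (τ x) := (intervalIntegral.integral_of_le (hτ0 x)).symm

lemma fprim_comp_aesm {N : ℕ} {Ω : Set (Euc N)} {f : Euc N → ℝ → ℝ}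
    (hmeas : ∀ t : ℝ, 0 ≤ t → Measurable fun x => f x t)
    (hcont : ∀ᵐ x ∂(volume.restrict Ω), ContinuousOn (f x) (Set.Ici 0))
    {τ : Euc N → ℝ} (hτ : Measurable τ) (hτ0 : ∀ x, 0 ≤ τ x) :
    AEStronglyMeasurable (fun x => Fprim f x (τ x)) (volume.restrict Ω) := by
  set g : Euc N × ℝ → ℝ := fun p => f p.1 (max p.2 0) with hg_def
  set gn : ℕ → Euc N × ℝ → ℝ :=
    fun n p => f p.1 ((⌊max p.2 0 * ((n:ℝ)+1)⌋₊ : ℝ) / ((n:ℝ)+1)) with hgn_def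
  have hgn_meas : ∀ n, Measurable (gn n) := by
    intro n
    have he : Measurable fun t : ℝ => ⌊max t 0 * ((n:ℝ)+1)⌋₊ :=
      Nat.measurable_floor.comp ((measurable_id.max measurable_const).mul measurable_const)
    have hF' : Measurable fun q : Euc N × ℕ => f q.1 ((q.2 : ℝ) / ((n:ℝ)+1)) := by
      apply measurable_from_prod_countable_left
      intro k
      exact hmeas ((k:ℝ)/((n:ℝ)+1)) (by positivity)
    exact hF'.comp (measurable_fst.prodMk (he.comp measurable_snd))
  have hconv : ∀ᵐ p ∂((volume.restrict Ω).prod (volume : Measure ℝ)),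
      Tendsto (fun n => gn n p) atTop (𝓝 (g p)) := by
    have := ae_prod_of_ae (volume.restrict Ω) (volume : Measure ℝ)
      hcont (Filter.Eventually.of_forall (fun _ : ℝ => trivial))
    filter_upwards [this] with p hp
    obtain ⟨hc, -⟩ := hp
    set t := max p.2 0 with ht_def
    have ht : 0 ≤ t := le_max_right _ _
    have htend := floor_div_tendsto t ht
    have hwithin : Tendsto (fun n : ℕ => (⌊t * ((n:ℝ)+1)⌋₊ : ℝ) / ((n:ℝ)+1)) atTop
        (𝓝[Set.Ici 0] t) := by
      apply tendsto_nhdsWithin_of_tendsto_nhds_of_eventually_within _ htend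
      exact Filter.Eventually.of_forall (fun n => mem_Ici.mpr (by positivity))
    have hcomp := ((hc t (mem_Ici.mpr ht)).tendsto).comp hwithin
    simpa [hgn_def, hg_def, Function.comp_def, ht_def] using hcomp
  have hgA : AEMeasurable g ((volume.restrict Ω).prod (volume : Measure ℝ)) :=
    aemeasurable_of_tendsto_metrizable_ae atTop (fun n => (hgn_meas n).aemeasurable) hconv
  exact fprim_rest hτ hτ0 hgA

lemma exists_nu {N : ℕ} (hN1 : 0 < N) {s : ℝ} (hs0 : 0 < s) {A : Euc N → Euc N}
    {Ω : Set (Euc N)} {u : Euc N → ℂ}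
    (hcompl : volume Ωᶜ ≠ 0)
    (hsupp : ∀ᵐ y, y ∉ Ω → u y = 0)
    (hGint : Integrable (fun pq : Euc N × Euc N =>
      ‖magDiff A u pq.1 pq.2‖^2 / ‖pq.1 - pq.2‖ ^ ((N:ℝ) + 2*s)) (volume.prod volume)) :
    AEMeasurable (fun x => ‖u x‖) volume := by
  haveI : Nonempty (Fin N) := Fin.pos_iff_nonempty.mp hN1
  haveI : Nontrivial (Euc N) := inferInstance
  set p : ℝ := (N:ℝ) + 2*s with hp_def
  have hp : 0 < p := by positivity
  have hslice := hGint.prod_left_ae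
  have hgood := hslice.and hsupp
  set P : Euc N → Prop := fun y =>
    Integrable (fun x => ‖magDiff A u x y‖^2 / ‖x - y‖ ^ p) volume ∧ (y ∉ Ω → u y = 0)
    with hP_def
  have hgood' : ∀ᵐ y, P y := by
    filter_upwards [hslice, hsupp] with y h1 h2
    exact ⟨h1, h2⟩
  have hnull : volume {y | ¬ P y} = 0 := ae_iff.mp hgood'
  have hns : ¬ (Ωᶜ ⊆ {y | ¬ P y}) := fun hsub => hcompl (measure_mono_null hsub hnull)
  obtain ⟨y₀, hy₀c, hy₀n⟩ := not_subset.mp hns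
  have hy₀g : P y₀ := not_not.mp hy₀n
  have hy0 : u y₀ = 0 := hy₀g.2 hy₀c
  have hint : Integrable (fun x => ‖u x‖^2 / ‖x - y₀‖ ^ p) volume := by
    have heq : (fun x => ‖magDiff A u x y₀‖^2 / ‖x - y₀‖ ^ p)
        = fun x => ‖u x‖^2 / ‖x - y₀‖ ^ p := by
      funext x
      simp [magDiff, hy0]
    rw [← heq]
    exact hy₀g.1
  have hms : AEMeasurable (fun x => ‖u x‖^2 / ‖x - y₀‖ ^ p) volume :=
    hint.aestronglyMeasurable.aemeasurable
  have hw_cont : Continuous fun x : Euc N => ‖x - y₀‖ ^ p :=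
    (Real.continuous_rpow_const hp.le).comp (continuous_id.sub continuous_const).norm
  have hsq : AEMeasurable (fun x => ‖u x‖^2) volume := by
    apply AEMeasurable.congr (hms.mul hw_cont.measurable.aemeasurable)
    have hne : ∀ᵐ x : Euc N, x ≠ y₀ := by
      simp only [ae_iff, not_not]
      exact measure_mono_null (fun x hx => by simpa using hx) (measure_singleton y₀)
    filter_upwards [hne] with x hx
    have hw0 : ‖x - y₀‖ ^ p ≠ 0 :=
      (Real.rpow_pos_of_pos (norm_pos_iff.mpr (sub_ne_zero.mpr hx)) p).ne'
    exact div_mul_cancel₀ _ hw0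
  apply AEMeasurable.congr (Real.continuous_sqrt.measurable.comp_aemeasurable hsq)
  exact Filter.Eventually.of_forall (fun x => Real.sqrt_sq (norm_nonneg _))

lemma choose_rho (θ C ε γ : ℝ) (hθ : 0 < θ) (hC : 0 < C) (hε : 0 < ε) (hγ : 0 < γ) :
    ∃ ρ : ℝ, 0 < ρ ∧ ρ < ε ∧ C * ρ ^ θ ≤ γ := by
  refine ⟨min (ε/2) ((γ/C) ^ θ⁻¹), ?_, ?_, ?_⟩
  · apply lt_min (by positivity)
    exact Real.rpow_pos_of_pos (by positivity) _
  · exact lt_of_le_of_lt (min_le_left _ _) (by linarith)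
  · have h1 : (min (ε/2) ((γ/C) ^ θ⁻¹)) ^ θ ≤ ((γ/C) ^ θ⁻¹) ^ θ := by
      apply Real.rpow_le_rpow (le_min (by positivity) (Real.rpow_nonneg (by positivity) _))
        (min_le_right _ _) hθ.le
    have h2 : ((γ/C) ^ θ⁻¹ : ℝ) ^ θ = γ / C := by
      rw [← Real.rpow_mul (by positivity), inv_mul_cancel₀ hθ.ne', Real.rpow_one]
    calc C * (min (ε/2) ((γ/C) ^ θ⁻¹)) ^ θ ≤ C * (γ/C) :=
          mul_le_mul_of_nonneg_left (h1.trans_eq h2) hC.le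
      _ = γ := by field_simp

lemma f_bounds_pt {β₀ ε' δ T C M : ℝ} {g : ℝ → ℝ}
    (hε' : 0 < ε') (hδpos : 0 < δ)
    (hcont : ContinuousOn g (Set.Ici 0))
    (h3 : ∀ t : ℝ, 0 < t → t < δ → |g t - β₀| ≤ ε')
    (h2 : ∀ t : ℝ, T ≤ t → |g t| ≤ 1)
    (h1 : ∀ t : ℝ, |t| ≤ Real.sqrt (max T δ) + 1 → |g (t^2) * t| ≤ C)
    (hM : M = max (|β₀| + ε') (max (max C 0 / Real.sqrt δ) 1)) :
    (∀ t : ℝ, 0 ≤ t → |g t| ≤ M) ∧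
    (∀ t : ℝ, 0 ≤ t → t < δ → (∫ σ in (0:ℝ)..t, g σ) ≤ (β₀ + ε') * t) ∧
    (∀ t : ℝ, 0 ≤ t → |∫ σ in (0:ℝ)..t, g σ| ≤ M * t) := by
  have hg0 : |g 0 - β₀| ≤ ε' := by
    have htd : Tendsto g (𝓝[>] (0:ℝ)) (𝓝 (g 0)) := by
      have := (hcont 0 (by simp)).tendsto
      exact this.mono_left (nhdsWithin_mono 0 Ioi_subset_Ici_self)
    have htd2 : Tendsto (fun t => |g t - β₀|) (𝓝[>] (0:ℝ)) (𝓝 (|g 0 - β₀|)) :=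
      ((htd.sub tendsto_const_nhds).abs)
    apply le_of_tendsto htd2
    filter_upwards [Ioo_mem_nhdsGT_of_mem (by constructor <;> simp [hδpos] : (0:ℝ) ∈ Set.Ico 0 δ)]
      with t ht
    exact h3 t ht.1 ht.2
  have hMb : |β₀| + ε' ≤ M := by rw [hM]; exact le_max_left _ _
  have hM1 : 1 ≤ M := by rw [hM]; exact le_trans (le_max_right _ _) (le_max_right _ _)
  have hMC : max C 0 / Real.sqrt δ ≤ M := by
    rw [hM]; exact le_trans (le_max_left _ _) (le_max_right _ _)
  have htri : ∀ y : ℝ, |g y| ≤ |β₀| + |g y - β₀| := by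
    intro y
    have h := abs_add_le β₀ (g y - β₀)
    have he : β₀ + (g y - β₀) = g y := by ring
    rw [he] at h
    exact h
  have habs : ∀ t : ℝ, 0 ≤ t → |g t| ≤ M := by
    intro t ht
    rcases eq_or_lt_of_le ht with h0|h0
    · rw [← h0]
      calc |g 0| ≤ |β₀| + |g 0 - β₀| := htri 0
        _ ≤ |β₀| + ε' := by linarith [hg0]
        _ ≤ M := hMb
    rcases lt_or_ge t δ with h4|h4
    · calc |g t| ≤ |β₀| + |g t - β₀| := htri t
        _ ≤ |β₀| + ε' := by linarith [h3 t h0 h4]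
        _ ≤ M := hMb
    rcases le_or_gt T t with h5|h5
    · exact (h2 t h5).trans hM1
    · -- δ ≤ t < T
      set r := Real.sqrt t with hr_def
      have hrpos : 0 < r := Real.sqrt_pos.mpr h0
      have hr2 : r^2 = t := Real.sq_sqrt ht
      have hrle : |r| ≤ Real.sqrt (max T δ) + 1 := by
        rw [abs_of_nonneg hrpos.le]
        have : r ≤ Real.sqrt (max T δ) :=
          Real.sqrt_le_sqrt (le_trans h5.le (le_max_left _ _))
        linarith
      have hkey := h1 r hrle
      rw [hr2] at hkey
      have hrδ : Real.sqrt δ ≤ r := Real.sqrt_le_sqrt h4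
      have hsδ : 0 < Real.sqrt δ := Real.sqrt_pos.mpr hδpos
      have hgle : |g t| ≤ C / r := by
        rw [le_div_iff₀ hrpos]
        calc |g t| * r = |g t * r| := by
              rw [abs_mul, abs_of_nonneg hrpos.le]
          _ ≤ C := hkey
      calc |g t| ≤ C / r := hgle
        _ ≤ max C 0 / r := by gcongr; exact le_max_left _ _
        _ ≤ max C 0 / Real.sqrt δ := by
            apply div_le_div_of_nonneg_left (le_max_right _ _) hsδ hrδ
        _ ≤ M := hMC
  have hgint : ∀ t : ℝ, 0 ≤ t → IntervalIntegrable g volume 0 t := by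
    intro t ht
    apply ContinuousOn.intervalIntegrable
    apply hcont.mono
    rw [Set.uIcc_of_le ht]
    intro σ hσ
    exact hσ.1
  refine ⟨habs, ?_, ?_⟩
  · intro t ht htδ
    have hgb : ∀ σ ∈ Set.Icc (0:ℝ) t, g σ ≤ β₀ + ε' := by
      intro σ hσ
      rcases eq_or_lt_of_le hσ.1 with h0|h0
      · rw [← h0]
        cases' abs_cases (g 0 - β₀) with hc hc <;> linarith [hg0]
      · have := h3 σ h0 (lt_of_le_of_lt hσ.2 htδ)
        cases' abs_cases (g σ - β₀) with hc hc <;> linarith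
    calc (∫ σ in (0:ℝ)..t, g σ) ≤ ∫ _ in (0:ℝ)..t, (β₀ + ε') :=
          intervalIntegral.integral_mono_on ht (hgint t ht) intervalIntegrable_const hgb
      _ = (β₀ + ε') * t := by simp; ring
  · intro t ht
    have := intervalIntegral.norm_integral_le_of_norm_le_const
      (C := M) (f := g) (a := 0) (b := t) ?_
    · rw [Real.norm_eq_abs] at this
      calc |∫ σ in (0:ℝ)..t, g σ| ≤ M * |t - 0| := this
        _ = M * t := by rw [sub_zero, abs_of_nonneg ht]
    · intro σ hσ
      rw [Set.uIoc_of_le ht] at hσ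
      exact habs σ hσ.1.le

end AuxLemmas

set_option maxHeartbeats 2000000 in
/-- if `β₀ + β_∞ < β_h^s`, then there are arbitrarily small radii
`ρ > 0` and a constant `c₀ > 0` such that `J_A ≥ c₀` on the sphere of radius `ρ`
of `E_h`. -/
theorem JA_positive_on_small_spheres_of_E
    {N : ℕ} (s : ℝ) (hs : s ∈ Set.Ioo (0 : ℝ) 1) (hN : 2 * s < N)
    (Ω : Set (Euc N)) (hΩo : IsOpen Ω) (hΩb : Bornology.IsBounded Ω)
    (hΩl : HasLipschitzBoundary Ω)
    (A : Euc N → Euc N) (hA : Continuous A)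
    (βinf β₀ : ℝ) (f : Euc N → ℝ → ℝ)
    (hf1 : Cond_f1 Ω f) (hf2 : Cond_f2 Ω f) (hf3 : Cond_f3 Ω f β₀)
    (β : ℕ → ℝ) (F : ℕ → Euc N → ℂ) (hES : EigenSystem N s A Ω β F)
    (h : ℕ) (hh : 1 ≤ h) (hlt : β₀ + βinf < β h) :
    ∀ ε : ℝ, 0 < ε → ∃ ρ : ℝ, 0 < ρ ∧ ρ < ε ∧ ∃ c₀ : ℝ, 0 < c₀ ∧
      ∀ u, MemEm N s A Ω F h u → Real.sqrt (Xnorm2 N s A u) = ρ →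
        c₀ ≤ JA N s A Ω βinf f u := by
  intro ε hε
  obtain ⟨hs0, hs1⟩ := hs
  have hN0 : (0:ℝ) < N := lt_trans (by positivity) hN
  have hN1 : 0 < N := by exact_mod_cast hN0
  have hΩm : MeasurableSet Ω := hΩo.measurableSet
  have hΩfin : volume Ω ≠ ⊤ := hΩb.measure_lt_top.ne
  set p : ℝ := (N:ℝ) + 2*s with hp_def
  have hp : 0 < p := by positivity
  have hcNs : 0 < cNs N s := by
    have h1 : 0 < Real.Gamma (((N:ℝ) + 2*s)/2) := Real.Gamma_pos_of_pos (by positivity)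
    have h2 : 0 < Real.Gamma (1 - s) := Real.Gamma_pos_of_pos (by linarith)
    have h3 : (0:ℝ) < 2 ^ (2*s) := Real.rpow_pos_of_pos (by norm_num) _
    have h4 : (0:ℝ) < Real.pi ^ ((N:ℝ)/2) := Real.rpow_pos_of_pos Real.pi_pos _
    unfold cNs
    positivity
  -- the complement of Ω has positive measure
  have hcompl : volume Ωᶜ ≠ 0 := by
    haveI : Nonempty (Fin N) := Fin.pos_iff_nonempty.mp hN1
    obtain ⟨R, hR⟩ := hΩb.subset_ball 0
    set z : Euc N := (max R 0 + 2) • EuclideanSpace.single (⟨0, hN1⟩ : Fin N) (1:ℝ) with hz_def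
    have hznorm : ‖z‖ = max R 0 + 2 := by
      rw [hz_def, norm_smul, EuclideanSpace.norm_single]
      simp [abs_of_nonneg (by positivity : (0:ℝ) ≤ max R 0 + 2)]
    have hzball : Metric.ball z 1 ⊆ Ωᶜ := by
      intro w hw
      intro hwΩ
      have h1 : ‖w - z‖ < 1 := by
        rw [← dist_eq_norm]
        exact hw
      have h2 : ‖w‖ < R := by
        have := hR hwΩ
        rw [Metric.mem_ball, dist_eq_norm, sub_zero] at this
        exact this
      have h3 : ‖z‖ ≤ ‖w - z‖ + ‖w‖ := by
        calc ‖z‖ = ‖(z - w) + w‖ := by rw [sub_add_cancel]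
          _ ≤ ‖z - w‖ + ‖w‖ := norm_add_le _ _
          _ = ‖w - z‖ + ‖w‖ := by rw [norm_sub_rev]
      rw [hznorm] at h3
      have h4 : R ≤ max R 0 := le_max_left _ _
      linarith
    intro h0
    exact (Metric.measure_ball_pos volume z one_pos).ne' (measure_mono_null hzball h0)
  -- constants from the conditions on f
  set ε' : ℝ := (β h - β₀ - βinf)/3 with hε'_def
  have hε' : 0 < ε' := by rw [hε'_def]; linarith
  obtain ⟨hβ0ne, hf3'⟩ := hf3
  obtain ⟨δ, hδpos, hδae⟩ := hf3' ε' hε'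
  obtain ⟨T, hTae⟩ := hf2 1 one_pos
  obtain ⟨C, hCae⟩ := hf1.2.2 (Real.sqrt (max T δ) + 1) (by positivity)
  set M : ℝ := max (|β₀| + ε') (max (max C 0 / Real.sqrt δ) 1) with hM_def
  have hM1 : 1 ≤ M := le_trans (le_max_right _ _) (le_max_right _ _)
  have hMpos : 0 < M := lt_of_lt_of_le one_pos hM1
  set KM : ℝ := M + |β₀ + ε'| with hKM_def
  have hKM : 0 < KM := by rw [hKM_def]; positivity
  have hfae : ∀ᵐ x ∂(volume.restrict Ω),
      (∀ t : ℝ, 0 ≤ t → |f x t| ≤ M) ∧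
      (∀ t : ℝ, 0 ≤ t → t < δ → Fprim f x t ≤ (β₀ + ε') * t) ∧
      (∀ t : ℝ, 0 ≤ t → |Fprim f x t| ≤ M * t) := by
    filter_upwards [hf1.2.1, hδae, hTae, hCae] with x hx1 hx2 hx3 hx4
    exact f_bounds_pt hε' hδpos hx1 hx2 hx3 hx4 hM_def
  obtain ⟨CL, b, hCL, hb, hcore⟩ := core_bounds hN1 hs0 hΩm hΩfin
  set θ : ℝ := 4*s/p with hθ_def
  have hθ : 0 < θ := by rw [hθ_def]; positivity
  set Cbad : ℝ := (4/(cNs N s) + 8*CL^2/((cNs N s)^2*δ))/b with hCbad_def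
  have hCbad : 0 < Cbad := by rw [hCbad_def]; positivity
  -- the main estimate, uniform in ρ and u
  have key : ∀ ρ : ℝ, 0 < ρ → ∀ u, MemEm N s A Ω F h u →
      Real.sqrt (Xnorm2 N s A u) = ρ →
      0 ≤ l2sq Ω u ∧ β h * l2sq Ω u ≤ ρ^2 ∧
      ρ^2 - (βinf + β₀ + ε') * l2sq Ω u - (KM * Cbad * ρ ^ θ) * ρ^2
        ≤ JA N s A Ω βinf f u := by
    intro ρ hρ u hu hρu
    obtain ⟨⟨hHsA, hsupp⟩, horth⟩ := hu
    set G : Euc N × Euc N → ℝ :=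
      fun pq => ‖magDiff A u pq.1 pq.2‖^2 / ‖pq.1 - pq.2‖ ^ p with hG_def
    have hXG : Xnorm2 N s A u = cNs N s / 2 * ∫ pq : Euc N × Euc N, G pq := by
      show Xinner N s A u u = _
      unfold Xinner
      congr 1
      apply integral_congr_ae
      apply Filter.Eventually.of_forall
      intro pq
      rw [hG_def]
      simp only [Complex.mul_conj, Complex.ofReal_re, Complex.normSq_eq_norm_sq]
      rfl
    have hG_nonneg : ∀ pq, 0 ≤ G pq := by
      intro pq
      rw [hG_def]
      apply div_nonneg (by positivity) (Real.rpow_nonneg (norm_nonneg _) _)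
    have hXnn : 0 ≤ Xnorm2 N s A u := by
      rw [hXG]
      exact mul_nonneg (by positivity) (integral_nonneg hG_nonneg)
    have hX2 : Xnorm2 N s A u = ρ^2 := by
      rw [← hρu]
      exact (Real.sq_sqrt hXnn).symm
    set Ik : ℝ := 2*ρ^2/(cNs N s) with hIk_def
    have hIkpos : 0 < Ik := by rw [hIk_def]; positivity
    have hIG : (∫ pq : Euc N × Euc N, G pq) = Ik := by
      have h1 : cNs N s / 2 * ∫ pq : Euc N × Euc N, G pq = ρ^2 := by rw [← hXG]; exact hX2
      rw [hIk_def]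
      field_simp at h1 ⊢
      linarith
    have hGint0 : Integrable G (volume : Measure (Euc N × Euc N)) := by
      by_contra hno
      rw [integral_undef hno] at hIG
      nlinarith
    have hGint : Integrable G (volume.prod volume) := by
      rwa [← Measure.volume_eq_prod]
    -- a measurable version of ‖u‖
    have hνae : AEMeasurable (fun x => ‖u x‖) volume := exists_nu hN1 hs0 hcompl hsupp hGint
    set ν : Euc N → ℝ := fun x => |hνae.mk _ x| with hν_def
    have hν_meas : Measurable ν := hνae.measurable_mk.abs
    have hν_eq : ∀ᵐ x, ν x = ‖u x‖ := by
      filter_upwards [hνae.ae_eq_mk] with x hx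
      show |hνae.mk _ x| = ‖u x‖
      rw [← hx, abs_of_nonneg (norm_nonneg _)]
    have hν0 : ∀ x, 0 ≤ ν x := fun x => abs_nonneg _
    have hνsupp : ∀ᵐ x, x ∉ Ω → ν x = 0 := by
      filter_upwards [hν_eq, hsupp] with x h1 h2 h3
      rw [h1, h2 h3, norm_zero]
    -- the kernel bound
    have hK : (∫⁻ pq : Euc N × Euc N,
        ENNReal.ofReal ((ν pq.1 - ν pq.2)^2 / ‖pq.1 - pq.2‖ ^ p) ∂(volume.prod volume))
        ≤ ENNReal.ofReal Ik := by
      have haeprod : ∀ᵐ pq ∂(volume.prod volume),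
          ν pq.1 = ‖u pq.1‖ ∧ ν pq.2 = ‖u pq.2‖ :=
        ae_prod_of_ae volume volume hν_eq hν_eq
      calc (∫⁻ pq : Euc N × Euc N,
            ENNReal.ofReal ((ν pq.1 - ν pq.2)^2 / ‖pq.1 - pq.2‖ ^ p) ∂(volume.prod volume))
          ≤ ∫⁻ pq : Euc N × Euc N, ENNReal.ofReal (G pq) ∂(volume.prod volume) := by
            apply lintegral_mono_ae
            filter_upwards [haeprod] with pq hpq
            apply ENNReal.ofReal_le_ofReal
            rw [hG_def]
            apply div_le_div_nonneg_num ?_ (sq_nonneg _) (Real.rpow_nonneg (norm_nonneg _) _)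
            rw [hpq.1, hpq.2]
            have hexp : ‖Complex.exp (Complex.I *
                ((inner ℝ (pq.1 - pq.2) (A ((2 : ℝ)⁻¹ • (pq.1 + pq.2))) : ℝ) : ℂ))‖ = 1 := by
              rw [Complex.norm_exp]
              simp
            have h2 : |‖u pq.1‖ - ‖u pq.2‖| ≤ ‖magDiff A u pq.1 pq.2‖ := by
              have h3 := abs_norm_sub_norm_le (u pq.1)
                (Complex.exp (Complex.I *
                  ((inner ℝ (pq.1 - pq.2) (A ((2 : ℝ)⁻¹ • (pq.1 + pq.2))) : ℝ) : ℂ)) * u pq.2)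
              rw [norm_mul, hexp, one_mul] at h3
              exact h3
            calc (‖u pq.1‖ - ‖u pq.2‖)^2 = |‖u pq.1‖ - ‖u pq.2‖|^2 := (sq_abs _).symm
              _ ≤ ‖magDiff A u pq.1 pq.2‖^2 := by
                  apply pow_le_pow_left₀ (abs_nonneg _) h2
        _ = ENNReal.ofReal (∫ pq : Euc N × Euc N, G pq ∂(volume.prod volume)) := by
            rw [ofReal_integral_eq_lintegral_ofReal hGint
              (Filter.Eventually.of_forall hG_nonneg)]
        _ = ENNReal.ofReal Ik := by
            rw [← hIG, ← Measure.volume_eq_prod]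
    obtain ⟨hL1, hBad⟩ := hcore ν hν_meas hν0 hνsupp Ik hIkpos.le hK
    -- the L² norm of u on Ω
    have hν_eqΩ : ∀ᵐ x ∂(volume.restrict Ω), ν x = ‖u x‖ := ae_restrict_of_ae hν_eq
    have hl2meas : AEStronglyMeasurable (fun x => ‖u x‖^2) (volume.restrict Ω) := by
      apply ((hν_meas.pow_const 2).aestronglyMeasurable).congr
      filter_upwards [hν_eqΩ] with x hx
      rw [hx]
    have hl2_eq : l2sq Ω u = (∫⁻ x in Ω, ENNReal.ofReal ((ν x)^2)).toReal := by
      show (∫ x in Ω, ‖u x‖^2) = _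
      rw [integral_eq_lintegral_of_nonneg_ae
        (Filter.Eventually.of_forall (fun x => sq_nonneg _)) hl2meas]
      congr 1
      apply lintegral_congr_ae
      filter_upwards [hν_eqΩ] with x hx
      rw [hx]
    have hl2nn : 0 ≤ l2sq Ω u := by rw [hl2_eq]; exact ENNReal.toReal_nonneg
    have hl2le : l2sq Ω u ≤ CL * Ik := by
      rw [hl2_eq]
      exact ENNReal.toReal_le_of_le_ofReal (mul_nonneg hCL.le hIkpos.le) hL1
    have hv2int : Integrable (fun x => ‖u x‖^2) (volume.restrict Ω) := by
      refine ⟨hl2meas, ?_⟩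
      rw [hasFiniteIntegral_iff_ofReal (Filter.Eventually.of_forall (fun x => sq_nonneg _))]
      have heq : (∫⁻ x in Ω, ENNReal.ofReal (‖u x‖^2)) = ∫⁻ x in Ω, ENNReal.ofReal ((ν x)^2) := by
        apply lintegral_congr_ae
        filter_upwards [hν_eqΩ] with x hx
        rw [hx]
      rw [heq]
      exact lt_of_le_of_lt hL1 ENNReal.ofReal_lt_top
    -- u is nontrivial, apply the minimality of β h
    have hune : ¬ u =ᵐ[volume] (0 : Euc N → ℂ) := by
      intro h0
      have hzero : G =ᵐ[volume.prod volume] 0 := by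
        have h0' : ∀ᵐ pq ∂(volume.prod volume), u pq.1 = 0 ∧ u pq.2 = 0 :=
          ae_prod_of_ae volume volume h0 h0
        filter_upwards [h0'] with pq hpq
        rw [hG_def]
        simp [magDiff, hpq.1, hpq.2]
      have hz2 : (∫ pq : Euc N × Euc N, G pq) = 0 := by
        rw [← Measure.volume_eq_prod] at hzero
        rw [integral_congr_ae hzero]
        simp
      nlinarith [hIG, hz2]
    have hmin : β h * l2sq Ω u ≤ ρ^2 := by
      rw [← hX2]
      exact hES.minim h hh u ⟨hHsA, hsupp⟩ horth hune
    -- bound on the nonlinear term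
    set SS : Set (Euc N) := Ω ∩ {x | δ ≤ (ν x)^2} with hSS_def
    have hSSmeas : MeasurableSet SS :=
      hΩm.inter (measurableSet_le measurable_const (hν_meas.pow_const 2))
    have hSSsub : SS ⊆ Ω := Set.inter_subset_left
    have hFae : AEStronglyMeasurable (fun x => Fprim f x (‖u x‖^2)) (volume.restrict Ω) := by
      apply (fprim_comp_aesm hf1.1 hf1.2.1 (hν_meas.pow_const 2)
        (fun x => sq_nonneg _)).congr
      filter_upwards [hν_eqΩ] with x hx
      rw [hx]
    have hdom : ∀ᵐ x ∂(volume.restrict Ω),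
        Fprim f x (‖u x‖^2) ≤ (β₀ + ε') * ‖u x‖^2
          + KM * Set.indicator SS (fun x => ‖u x‖^2) x ∧
        |Fprim f x (‖u x‖^2)| ≤ M * ‖u x‖^2 := by
      filter_upwards [hfae, hν_eqΩ, ae_restrict_mem hΩm] with x hx1 hx2 hxΩ
      have ht : (0:ℝ) ≤ ‖u x‖^2 := sq_nonneg _
      refine ⟨?_, hx1.2.2 _ ht⟩
      rcases lt_or_ge (‖u x‖^2) δ with h4|h4
      · have h5 := hx1.2.1 _ ht h4
        have h6 : 0 ≤ Set.indicator SS (fun x => ‖u x‖^2) x :=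
          Set.indicator_apply_nonneg (fun _ => sq_nonneg _)
        nlinarith
      · have hxSS : x ∈ SS := ⟨hxΩ, by rw [Set.mem_setOf_eq, hx2]; exact h4⟩
        rw [Set.indicator_of_mem hxSS]
        have h5 : Fprim f x (‖u x‖^2) ≤ M * ‖u x‖^2 :=
          le_trans (le_abs_self _) (hx1.2.2 _ ht)
        have h6 : 0 ≤ ((β₀ + ε') + |β₀ + ε'|) * ‖u x‖^2 :=
          mul_nonneg (by cases' abs_cases (β₀ + ε') with hc hc <;> linarith) ht
        rw [hKM_def]
        nlinarith
    have hFint : Integrable (fun x => Fprim f x (‖u x‖^2)) (volume.restrict Ω) := by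
      apply Integrable.mono' (hv2int.const_mul M) hFae
      filter_upwards [hdom] with x hx
      rw [Real.norm_eq_abs]
      exact hx.2
    have hindint : Integrable (Set.indicator SS (fun x => ‖u x‖^2)) (volume.restrict Ω) :=
      hv2int.indicator hSSmeas
    set Breal : ℝ := ∫ x in Ω, Set.indicator SS (fun x => ‖u x‖^2) x with hBreal_def
    have hIF_le : (∫ x in Ω, Fprim f x (‖u x‖^2)) ≤ (β₀ + ε') * l2sq Ω u + KM * Breal := by
      calc (∫ x in Ω, Fprim f x (‖u x‖^2))
          ≤ ∫ x in Ω, ((β₀ + ε') * ‖u x‖^2 + KM * Set.indicator SS (fun x => ‖u x‖^2) x) := by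
            apply integral_mono_ae hFint ((hv2int.const_mul _).add (hindint.const_mul _))
            filter_upwards [hdom] with x hx
            exact hx.1
        _ = (β₀ + ε') * l2sq Ω u + KM * Breal := by
            rw [integral_add (hv2int.const_mul _) (hindint.const_mul _),
              integral_const_mul, integral_const_mul]
            rfl
    -- estimating Breal
    set r : ℝ := ρ ^ (2/p) with hr_def
    have hrpos : 0 < r := Real.rpow_pos_of_pos hρ _
    have hrp2 : r ^ p = ρ^2 := by
      rw [hr_def, ← Real.rpow_mul hρ.le, div_mul_cancel₀ _ hp.ne',
        show (2:ℝ) = ((2:ℕ):ℝ) by norm_num, Real.rpow_natCast]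
    have hrN : r ^ (N:ℝ) = ρ ^ (2*(N:ℝ)/p) := by
      rw [hr_def, ← Real.rpow_mul hρ.le]
      congr 1
      ring
    have hbadreal : Breal ≤ (2*(r^p)*Ik + 2*(CL*Ik)*(CL*Ik/δ))/(r^(N:ℝ)*b) := by
      have h1 := hBad δ hδpos r hrpos
      have h2 : Breal = (∫⁻ x in SS, ENNReal.ofReal ((ν x)^2)).toReal := by
        rw [hBreal_def, integral_indicator hSSmeas, Measure.restrict_restrict hSSmeas,
          Set.inter_eq_self_of_subset_left hSSsub,
          integral_eq_lintegral_of_nonneg_ae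
            (Filter.Eventually.of_forall (fun x => sq_nonneg _))
            (hl2meas.mono_measure (Measure.restrict_mono hSSsub le_rfl))]
        congr 1
        apply lintegral_congr_ae
        filter_upwards [ae_restrict_of_ae hν_eq] with x hx
        rw [hx]
      rw [h2]
      apply ENNReal.toReal_le_of_le_ofReal ?_ h1
      have hrpn : (0:ℝ) ≤ r ^ p := Real.rpow_nonneg hrpos.le _
      have hrNn : (0:ℝ) ≤ r ^ (N:ℝ) := Real.rpow_nonneg hrpos.le _
      have hCI : (0:ℝ) ≤ CL * Ik := mul_nonneg hCL.le hIkpos.le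
      apply div_nonneg
      · have := mul_nonneg (mul_nonneg (by norm_num : (0:ℝ) ≤ 2) hrpn) hIkpos.le
        have := mul_nonneg (mul_nonneg (by norm_num : (0:ℝ) ≤ 2) hCI) (div_nonneg hCI hδpos.le)
        linarith
      · exact mul_nonneg hrNn hb.le
    have hcomp : (2*(r^p)*Ik + 2*(CL*Ik)*(CL*Ik/δ))/(r^(N:ℝ)*b) = Cbad * ρ^((2:ℝ)+θ) := by
      have hsub : ρ^((2:ℝ)+θ) = ρ^(4 - 2*(N:ℝ)/p) := by
        congr 1
        rw [hθ_def, hp_def]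
        field_simp
        ring
      rw [hrp2, hrN, hIk_def, hCbad_def, hsub, Real.rpow_sub hρ,
        show (4:ℝ) = ((4:ℕ):ℝ) by norm_num, Real.rpow_natCast]
      have hρN : (0:ℝ) < ρ ^ (2*(N:ℝ)/p) := Real.rpow_pos_of_pos hρ _
      field_simp
      ring
    have hbound : Breal ≤ Cbad * ρ^((2:ℝ)+θ) := by
      rw [← hcomp]
      exact hbadreal
    have hsplit : ρ^((2:ℝ)+θ) = ρ^2 * ρ^θ := by
      rw [Real.rpow_add hρ, show (2:ℝ) = ((2:ℕ):ℝ) by norm_num, Real.rpow_natCast]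
    refine ⟨hl2nn, hmin, ?_⟩
    have hJA : JA N s A Ω βinf f u
        = ρ^2 - βinf * l2sq Ω u - ∫ x in Ω, Fprim f x (‖u x‖^2) := by
      unfold JA
      rw [hX2]
    rw [hJA]
    have hKMB : KM * Breal ≤ (KM * Cbad * ρ ^ θ) * ρ^2 := by
      calc KM * Breal ≤ KM * (Cbad * ρ^((2:ℝ)+θ)) := mul_le_mul_of_nonneg_left hbound hKM.le
        _ = (KM * Cbad * ρ^θ) * ρ^2 := by rw [hsplit]; ring
    linarith [hIF_le, hKMB]
  -- choice of ρ and conclusion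
  rcases le_or_gt (βinf + β₀ + ε') 0 with hcase|hcase
  · obtain ⟨ρ, hρ0, hρε, hργ⟩ :=
      choose_rho θ (KM*Cbad) ε (1/2) hθ (mul_pos hKM hCbad) hε (by norm_num)
    refine ⟨ρ, hρ0, hρε, ρ^2*(1/2), by positivity, ?_⟩
    intro u hu hru
    obtain ⟨hl2nn, hmin, hkey⟩ := key ρ hρ0 u hu hru
    have h1 : 0 ≤ -(βinf + β₀ + ε') * l2sq Ω u := mul_nonneg (by linarith) hl2nn
    have h2 : (KM * Cbad * ρ ^ θ) * ρ^2 ≤ (1/2) * ρ^2 :=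
      mul_le_mul_of_nonneg_right hργ (sq_nonneg _)
    nlinarith [hkey]
  · have hrel : β h = βinf + β₀ + 3*ε' := by rw [hε'_def]; ring
    have hβh : 0 < β h := by linarith
    obtain ⟨ρ, hρ0, hρε, hργ⟩ :=
      choose_rho θ (KM*Cbad) ε (ε'/β h) hθ (mul_pos hKM hCbad) hε (by positivity)
    refine ⟨ρ, hρ0, hρε, ρ^2*(ε'/β h), by positivity, ?_⟩
    intro u hu hru
    obtain ⟨hl2nn, hmin, hkey⟩ := key ρ hρ0 u hu hru
    have hl2b : l2sq Ω u ≤ ρ^2/β h := by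
      rw [le_div_iff₀ hβh]
      nlinarith [hmin]
    have h2 : (βinf + β₀ + ε') * l2sq Ω u ≤ (βinf + β₀ + ε') * (ρ^2/β h) :=
      mul_le_mul_of_nonneg_left hl2b hcase.le
    have h3 : (KM * Cbad * ρ ^ θ) * ρ^2 ≤ (ε'/β h) * ρ^2 :=
      mul_le_mul_of_nonneg_right hργ (sq_nonneg _)
    have h4 : ρ^2 - (βinf + β₀ + ε') * (ρ^2/β h) - (ε'/β h)*ρ^2 = ρ^2*(ε'/β h) := by
      have he : βinf + β₀ + ε' = β h - 2*ε' := by rw [hε'_def]; ring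
      rw [he]
      field_simp
      ring
    calc ρ^2*(ε'/β h) = ρ^2 - (βinf + β₀ + ε') * (ρ^2/β h) - (ε'/β h)*ρ^2 := h4.symm
      _ ≤ ρ^2 - (βinf + β₀ + ε') * l2sq Ω u - (KM * Cbad * ρ ^ θ) * ρ^2 := by
          linarith [h2, h3]
      _ ≤ JA N s A Ω βinf f u := hkey
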